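/- arXiv:2304.09495 — 5 statements merged into one kernel-verified Lean document; each statement's English description precedes it below -/
import Mathlib

section
/- Every m×n integer matrix M can be transformed, using only negations of rows and negations of columns (i.e., there exist diagonal ±1 matrices D₁ of size m×m and D₂ of size n×n), into a matrix N = D₁·M·D₂ in which every nonzero row and every nonzero column begins with a negative entry. -/
open Matrix

/-- A vector begins with a negative entry: its first nonzero coordinate is negative. -/
def BeginsNeg {k : ℕ} (v : Fin k → ℤ) : Prop :=
  ∃ j : Fin k, v j < 0 ∧ ∀ i : Fin k, i < j → v i = 0

/-!
Give entry `(i, j)` the weight `2 ^ (m - 1 - i) * 2 ^ (n - 1 - j)` and choose the row and column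
negations that minimise the weighted sum of the signs of the entries. Since `2 ^ r` exceeds
`2 ^ (r - 1) + ⋯ + 1`, the sign of a row's weighted sum is the sign of its first nonzero entry.
Negating a row changes the total by minus twice the row's weighted sum, so at the minimum no
nonzero row begins with a positive entry; by symmetry the same holds for the columns.
-/

section SignWeight

variable {k : ℕ}

lemma abs_sum_mul_two_pow_rev_lt (ε : Fin k → ℤ) (hε : ∀ j, |ε j| ≤ 1) :
    |∑ j, ε j * 2 ^ (j.rev : ℕ)| < 2 ^ k := by
  induction k with
  | zero => simp
  | succ k ih =>
    have hhead : |ε 0 * 2 ^ ((0 : Fin (k + 1)).rev : ℕ)| ≤ 2 ^ k := by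
      simpa [abs_mul] using hε 0
    have htail := ih (fun j => ε j.succ) fun j => hε j.succ
    simp only [Fin.sum_univ_succ, Fin.rev_succ, Fin.val_castSucc]
    refine (abs_add_le _ _).trans_lt ?_
    rw [pow_succ]
    linarith

lemma sum_mul_two_pow_rev_pos (ε : Fin k → ℤ) (hε : ∀ j, |ε j| ≤ 1) {j₀ : Fin k}
    (hpos : 0 < ε j₀) (hzero : ∀ i < j₀, ε i = 0) :
    0 < ∑ j, ε j * 2 ^ (j.rev : ℕ) := by
  induction k with
  | zero => exact j₀.elim0
  | succ k ih =>
    rw [Fin.sum_univ_succ]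
    simp only [Fin.rev_succ, Fin.val_castSucc]
    rcases Fin.eq_zero_or_eq_succ j₀ with rfl | ⟨j₁, rfl⟩
    · have htail := abs_sum_mul_two_pow_rev_lt (fun j => ε j.succ) fun j => hε j.succ
      have hhead : 2 ^ k ≤ ε 0 * 2 ^ ((0 : Fin (k + 1)).rev : ℕ) := by
        have hone : 1 ≤ ε 0 := hpos
        simpa using mul_le_mul_of_nonneg_right hone (by positivity : (0 : ℤ) ≤ 2 ^ k)
      linarith [(abs_lt.mp htail).1]
    · rw [hzero 0 (Fin.succ_pos j₁), zero_mul, zero_add]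
      exact ih (fun j => ε j.succ) (fun j => hε j.succ) hpos fun i hi =>
        hzero i.succ (Fin.succ_lt_succ_iff.mpr hi)

def signWeight (x : Fin k → ℤ) : ℤ :=
  ∑ j, (x j).sign * 2 ^ (j.rev : ℕ)

lemma signWeight_neg (x : Fin k → ℤ) : signWeight (-x) = -signWeight x := by
  simp [signWeight, Int.sign_neg, Finset.sum_neg_distrib]

lemma exists_first_ne_zero {x : Fin k → ℤ} (hx : x ≠ 0) :
    ∃ j, x j ≠ 0 ∧ ∀ i < j, x i = 0 := by
  obtain ⟨j, hj, hmin⟩ := wellFounded_lt.has_min {j | x j ≠ 0} (Function.ne_iff.mp hx)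
  exact ⟨j, hj, fun i hi => by_contra fun h => hmin i h hi⟩

lemma beginsNeg_of_signWeight_nonpos {x : Fin k → ℤ} (hx : x ≠ 0) (h : signWeight x ≤ 0) :
    BeginsNeg x := by
  obtain ⟨j, hj, hzero⟩ := exists_first_ne_zero hx
  refine ⟨j, hj.lt_of_le ?_, hzero⟩
  by_contra! hpos
  have hsign : ∀ i, |(x i).sign| ≤ 1 := fun i => by
    rcases Int.sign_trichotomy (x i) with h | h | h <;> simp [h]
  have : 0 < signWeight x := sum_mul_two_pow_rev_pos _ hsign (j₀ := j)
    (by simp [Int.sign_eq_one_iff_pos.mpr hpos]) fun i hi => by simp [hzero i hi]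
  linarith

end SignWeight

section SignPotential

variable {m n : ℕ}

def signPotential (N : Matrix (Fin m) (Fin n) ℤ) : ℤ :=
  ∑ i, 2 ^ (i.rev : ℕ) * signWeight (N i)

lemma signPotential_transpose (N : Matrix (Fin m) (Fin n) ℤ) :
    signPotential Nᵀ = signPotential N := by
  simp only [signPotential, signWeight, Finset.mul_sum, transpose_apply]
  rw [Finset.sum_comm]
  exact Finset.sum_congr rfl fun i _ => Finset.sum_congr rfl fun j _ => by ring

lemma signPotential_updateRow_neg (N : Matrix (Fin m) (Fin n) ℤ) (i : Fin m) :
    signPotential (N.updateRow i (-N i)) =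
      signPotential N - 2 * (2 ^ (i.rev : ℕ) * signWeight (N i)) := by
  have hdiff : signPotential (N.updateRow i (-N i)) - signPotential N =
      2 ^ (i.rev : ℕ) * signWeight (-N i) - 2 ^ (i.rev : ℕ) * signWeight (N i) := by
    rw [signPotential, signPotential, ← Finset.sum_sub_distrib, Fintype.sum_eq_single i]
    · simp
    · intro k hk
      simp [updateRow_ne hk]
  rw [signWeight_neg] at hdiff
  linarith

lemma beginsNeg_of_signPotential_le_updateRow_neg {N : Matrix (Fin m) (Fin n) ℤ} {i : Fin m}
    (hNi : N i ≠ 0) (hmin : signPotential N ≤ signPotential (N.updateRow i (-N i))) :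
    BeginsNeg (N i) := by
  refine beginsNeg_of_signWeight_nonpos hNi ?_
  rw [signPotential_updateRow_neg] at hmin
  have : (0 : ℤ) < 2 ^ (i.rev : ℕ) := by positivity
  nlinarith

end SignPotential

section Negations

variable {l n R : Type*} [Fintype l] [Fintype n] [DecidableEq l] [DecidableEq n] [CommRing R]

lemma diagonal_update_neg_mul_mul (d : l → R) (M : Matrix l n R) (e : n → R) (i : l) :
    diagonal (Function.update d i (-d i)) * M * diagonal e =
      (diagonal d * M * diagonal e).updateRow i (-(diagonal d * M * diagonal e) i) := by
  ext k j
  rcases eq_or_ne k i with rfl | hk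
  · simp [diagonal_mul, mul_diagonal]
  · simp [diagonal_mul, mul_diagonal, updateRow_ne hk, Function.update_of_ne hk]

lemma transpose_mul_diagonal_update_neg (d : l → R) (M : Matrix l n R) (e : n → R) (j : n) :
    (diagonal d * M * diagonal (Function.update e j (-e j)))ᵀ =
      (diagonal d * M * diagonal e)ᵀ.updateRow j (-(diagonal d * M * diagonal e)ᵀ j) := by
  simp only [transpose_mul, diagonal_transpose, ← Matrix.mul_assoc]
  exact diagonal_update_neg_mul_mul e Mᵀ d j

end Negations

lemma Units.val_comp_update_neg {ι α : Type*} [DecidableEq ι] [Monoid α] [HasDistribNeg α]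
    (u : ι → αˣ) (i : ι) :
    Units.val ∘ Function.update u i (-u i) =
      Function.update (Units.val ∘ u) i (-(Units.val ∘ u) i) := by
  rw [Function.comp_update, Units.val_neg]
  rfl

/-- Every integer matrix can be transformed, using only row negations and
column negations (i.e. multiplication by diagonal ±1 matrices on the left and right),
into a matrix in which every nonzero row and every nonzero column begins with a
negative entry. -/
theorem exists_row_col_negations_all_begin_negative {m n : ℕ}
    (M : Matrix (Fin m) (Fin n) ℤ) :
    ∃ (d₁ : Fin m → ℤ) (d₂ : Fin n → ℤ),
      (∀ i, d₁ i = 1 ∨ d₁ i = -1) ∧ (∀ j, d₂ j = 1 ∨ d₂ j = -1) ∧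
      (∀ i : Fin m,
        ((Matrix.diagonal d₁ * M * Matrix.diagonal d₂) i ≠ 0 →
          BeginsNeg ((Matrix.diagonal d₁ * M * Matrix.diagonal d₂) i))) ∧
      (∀ j : Fin n,
        ((fun i => (Matrix.diagonal d₁ * M * Matrix.diagonal d₂) i j) ≠ 0 →
          BeginsNeg (fun i => (Matrix.diagonal d₁ * M * Matrix.diagonal d₂) i j))) := by
  obtain ⟨⟨u, v⟩, hmin⟩ := Finite.exists_min fun p : (Fin m → ℤˣ) × (Fin n → ℤˣ) =>
    signPotential (diagonal (Units.val ∘ p.1) * M * diagonal (Units.val ∘ p.2))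
  refine ⟨Units.val ∘ u, Units.val ∘ v, fun i => Int.isUnit_iff.mp (u i).isUnit,
    fun j => Int.isUnit_iff.mp (v j).isUnit, fun i hi => ?_, fun j hj => ?_⟩
  · have hrow := hmin (Function.update u i (-u i), v)
    rw [Units.val_comp_update_neg, diagonal_update_neg_mul_mul] at hrow
    exact beginsNeg_of_signPotential_le_updateRow_neg hi hrow
  · have hcol := hmin (u, Function.update v j (-v j))
    rw [Units.val_comp_update_neg, ← signPotential_transpose,
      ← signPotential_transpose (_ * _ * _), transpose_mul_diagonal_update_neg] at hcol
    exact beginsNeg_of_signPotential_le_updateRow_neg hj hcol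
end

section
/- Let M be an m×n integer matrix that is minimal in its Hadamard equivalence class with respect to the row-lex ordering. Then the columns of M are in weakly increasing order with respect to the lexicographic order on integer m-vectors: M^1 ≤ M^2 ≤ ⋯ ≤ M^n, where M^j denotes the j-th column of M. -/
open Matrix

/-- A signed permutation (monomial) matrix: a square integer matrix with entries in
`{-1, 0, 1}` having exactly one nonzero entry in each row and each column. -/
def IsSignedPerm {m : ℕ} (P : Matrix (Fin m) (Fin m) ℤ) : Prop :=
  (∀ i j, P i j = -1 ∨ P i j = 0 ∨ P i j = 1) ∧
  (∀ i, ∃! j, P i j ≠ 0) ∧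
  (∀ j, ∃! i, P i j ≠ 0)

/-- Hadamard equivalence: `N = P * M * Q` for signed permutation matrices `P`, `Q`. -/
def HadamardEquiv {m n : ℕ} (M N : Matrix (Fin m) (Fin n) ℤ) : Prop :=
  ∃ P : Matrix (Fin m) (Fin m) ℤ, ∃ Q : Matrix (Fin n) (Fin n) ℤ,
    IsSignedPerm P ∧ IsSignedPerm Q ∧ N = P * M * Q

/-- The row-lex ordering: compare matrices lexicographically row by row, rows being
compared lexicographically entry by entry. -/
def rowLexLe {m n : ℕ} (M N : Matrix (Fin m) (Fin n) ℤ) : Prop :=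
  toLex (fun i => toLex (M i)) ≤ toLex (fun i => toLex (N i))

/-- `M` is minimal in its Hadamard equivalence class with respect to row-lex order. -/
def IsRowLexMinimal {m n : ℕ} (M : Matrix (Fin m) (Fin n) ℤ) : Prop :=
  ∀ N, HadamardEquiv M N → rowLexLe M N

/-! If a column `j₁` were lexicographically larger than a later column `j₂`, swapping the two
columns (a Hadamard equivalence) would leave every row above the first row where the columns
differ unchanged and decrease that row at position `j₁`, giving a row-lex smaller matrix. -/

lemma isSignedPerm_permMatrix {k : ℕ} (σ : Equiv.Perm (Fin k)) :
    IsSignedPerm (σ.toPEquiv.toMatrix : Matrix (Fin k) (Fin k) ℤ) := by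
  have hentry : ∀ i j, (σ.toPEquiv.toMatrix : Matrix (Fin k) (Fin k) ℤ) i j
      = if j = σ i then 1 else 0 := by
    intro i j
    rw [PEquiv.toMatrix_toPEquiv_apply, Pi.single_apply]
  refine ⟨fun i j => ?_, fun i => ⟨σ i, ?_, fun j hj => ?_⟩,
    fun j => ⟨σ.symm j, ?_, fun i hi => ?_⟩⟩
  all_goals simp only [hentry] at *
  · split_ifs <;> simp
  · simp
  · simpa using hj
  · simp
  · simpa [eq_comm, Equiv.eq_symm_apply] using hi

lemma isSignedPerm_one {k : ℕ} : IsSignedPerm (1 : Matrix (Fin k) (Fin k) ℤ) := by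
  simpa using isSignedPerm_permMatrix (Equiv.refl (Fin k))

lemma hadamardEquiv_submatrix_perm {m n : ℕ} (M : Matrix (Fin m) (Fin n) ℤ)
    (σ : Equiv.Perm (Fin n)) : HadamardEquiv M (M.submatrix id σ) :=
  ⟨1, σ.symm.toPEquiv.toMatrix, isSignedPerm_one, isSignedPerm_permMatrix σ.symm, by
    rw [Matrix.one_mul, PEquiv.mul_toMatrix_toPEquiv, Equiv.symm_symm]⟩

lemma comp_swap_eq_self {α β : Type*} [DecidableEq α] {f : α → β} {a b : α}
    (h : f a = f b) : f ∘ Equiv.swap a b = f := by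
  funext x
  rcases eq_or_ne x a with rfl | hxa
  · simp [h]
  rcases eq_or_ne x b with rfl | hxb
  · simp [h]
  · simp [Equiv.swap_apply_of_ne_of_ne hxa hxb]

lemma toLex_rows_submatrix_swap_lt {ι κ α : Type*} [LT ι] [Preorder κ] [DecidableEq κ] [LT α]
    (M : Matrix ι κ α) {j₁ j₂ : κ} (hle : j₁ ≤ j₂)
    (hcols : toLex (fun i => M i j₂) < toLex (fun i => M i j₁)) :
    toLex (fun i => toLex (M.submatrix id (Equiv.swap j₁ j₂) i)) <
      toLex (fun i => toLex (M i)) := by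
  obtain ⟨i₀, hbefore, hi₀⟩ := hcols
  exact ⟨i₀, fun i hi => congrArg toLex (comp_swap_eq_self (hbefore i hi).symm),
    Pi.lex_desc hle hi₀⟩

/-- In a matrix minimal in its Hadamard equivalence class with respect to the
row-lex ordering, the columns are in weakly increasing lexicographic order. -/
theorem cols_of_minimal_monotone {m n : ℕ} (M : Matrix (Fin m) (Fin n) ℤ)
    (hM : IsRowLexMinimal M) :
    ∀ j₁ j₂ : Fin n, j₁ ≤ j₂ →
      toLex (fun i => M i j₁) ≤ toLex (fun i => M i j₂) := by
  intro j₁ j₂ hle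
  by_contra hcols
  have hswap_lt := toLex_rows_submatrix_swap_lt M hle (not_le.mp hcols)
  exact (hM _ (hadamardEquiv_submatrix_perm M (Equiv.swap j₁ j₂))).not_gt hswap_lt
end

section
/- An m×n integer matrix M is minimal in its Hadamard equivalence class with respect to the row-lex ordering if and only if for every i with 1 ≤ i ≤ m, the i×n submatrix M_{1:i} consisting of the first i rows of M is minimal in its own Hadamard equivalence class (among i×n integer matrices). -/
open Matrix

/-! Truncation to the first `i` rows is monotone for the row-lex order, so every matrix equivalent
to `M` whose first `i` rows are smaller than `M_{1:i}` would already be smaller than `M`. Such a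
matrix exists whenever `M_{1:i}` is not minimal: a transformation `P * M_{1:i} * Q` lifts to
`diag(P, 1) * M * Q`, which has `P * M_{1:i} * Q` as its first `i` rows. The converse is the case
`i = m`. -/

namespace Matrix

variable {R : Type*} {i m : ℕ}

def extendByOne [Zero R] [One R] (P : Matrix (Fin i) (Fin i) R) (m : ℕ) :
    Matrix (Fin m) (Fin m) R :=
  fun a b =>
    if ha : (a : ℕ) < i then
      if hb : (b : ℕ) < i then P ⟨a, ha⟩ ⟨b, hb⟩ else 0
    else (1 : Matrix (Fin m) (Fin m) R) a b

theorem extendByOne_transpose [Zero R] [One R] (P : Matrix (Fin i) (Fin i) R) :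
    Pᵀ.extendByOne m = (P.extendByOne m)ᵀ := by
  ext a b
  rcases eq_or_ne a b with rfl | hab
  · by_cases ha : (a : ℕ) < i <;> simp [extendByOne, ha]
  · by_cases ha : (a : ℕ) < i <;> by_cases hb : (b : ℕ) < i <;>
      simp [extendByOne, ha, hb, one_apply_ne hab, one_apply_ne hab.symm]

theorem existsUnique_ne_zero_extendByOne [Zero R] [One R] [NeZero (1 : R)] (h : i ≤ m)
    {P : Matrix (Fin i) (Fin i) R} (hP : ∀ r, ∃! c, P r c ≠ 0) (a : Fin m) :
    ∃! b, P.extendByOne m a b ≠ 0 := by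
  by_cases ha : (a : ℕ) < i
  · obtain ⟨c, hc, hc_uniq⟩ := hP ⟨a, ha⟩
    refine ⟨Fin.castLE h c, by simpa [extendByOne, ha] using hc, fun b hb => ?_⟩
    by_cases hb' : (b : ℕ) < i
    · simp only [extendByOne, ha, hb', dite_true] at hb
      simp [← hc_uniq _ hb]
    · simp [extendByOne, ha, hb'] at hb
  · refine ⟨a, by simp [extendByOne, ha], fun b hb => ?_⟩
    by_contra hba
    simp [extendByOne, ha, Ne.symm hba] at hb

theorem extendByOne_mul_submatrix_castLE [Semiring R] {n : Type*} (h : i ≤ m)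
    (P : Matrix (Fin i) (Fin i) R) (M : Matrix (Fin m) n R) :
    (P.extendByOne m * M).submatrix (Fin.castLE h) id = P * M.submatrix (Fin.castLE h) id := by
  ext r c
  simp only [submatrix_apply, mul_apply, id_eq]
  refine (Fintype.sum_of_injective (Fin.castLE h) (Fin.castLE_injective h) _ _
    (fun b hb => ?_) (fun k => by simp [extendByOne])).symm
  have hbi : ¬ (b : ℕ) < i := fun hbi => hb ⟨⟨b, hbi⟩, rfl⟩
  simp [extendByOne, hbi]

end Matrix

open Matrix

theorem IsSignedPerm.extendByOne {i m : ℕ} (h : i ≤ m) {P : Matrix (Fin i) (Fin i) ℤ}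
    (hP : IsSignedPerm P) : IsSignedPerm (P.extendByOne m) := by
  obtain ⟨hentries, hrows, hcols⟩ := hP
  refine ⟨fun a b => ?_, existsUnique_ne_zero_extendByOne h hrows, fun b => ?_⟩
  · unfold Matrix.extendByOne
    split_ifs
    · exact hentries _ _
    · simp
    · rcases eq_or_ne a b with rfl | hab <;> simp [one_apply_ne, *]
  · have := existsUnique_ne_zero_extendByOne h (P := Pᵀ) hcols b
    rwa [extendByOne_transpose] at this

theorem Pi.toLex_lt_of_toLex_comp_castLE_lt {α : Type*} [LT α] {i m : ℕ} (h : i ≤ m)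
    {f g : Fin m → α} (hlt : toLex (f ∘ Fin.castLE h) < toLex (g ∘ Fin.castLE h)) :
    toLex f < toLex g := by
  obtain ⟨r, hprefix, hr⟩ := hlt
  exact ⟨Fin.castLE h r, fun j hj => hprefix ⟨j, lt_trans hj r.isLt⟩ hj, hr⟩

theorem rowLexLe.submatrix_castLE {i m n : ℕ} (h : i ≤ m) {M N : Matrix (Fin m) (Fin n) ℤ}
    (hMN : rowLexLe M N) :
    rowLexLe (M.submatrix (Fin.castLE h) id) (N.submatrix (Fin.castLE h) id) := by
  unfold rowLexLe at *
  contrapose! hMN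
  exact Pi.toLex_lt_of_toLex_comp_castLE_lt h hMN

theorem HadamardEquiv.exists_submatrix_castLE_eq {i m n : ℕ} (h : i ≤ m)
    {M : Matrix (Fin m) (Fin n) ℤ} {N : Matrix (Fin i) (Fin n) ℤ}
    (hN : HadamardEquiv (M.submatrix (Fin.castLE h) id) N) :
    ∃ N', HadamardEquiv M N' ∧ N'.submatrix (Fin.castLE h) id = N := by
  obtain ⟨P, Q, hP, hQ, rfl⟩ := hN
  refine ⟨P.extendByOne m * M * Q, ⟨_, Q, hP.extendByOne h, hQ, rfl⟩, ?_⟩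
  rw [submatrix_mul _ _ _ id _ Function.bijective_id, extendByOne_mul_submatrix_castLE,
    submatrix_id_id]

/-- A matrix is minimal in its Hadamard class with respect to the row-lex
ordering iff for every `i` with `1 ≤ i ≤ m`, the submatrix consisting of its first `i`
rows is minimal in its own Hadamard class. -/
theorem isMinimal_iff_initial_rows_isMinimal {m n : ℕ} (M : Matrix (Fin m) (Fin n) ℤ) :
    IsRowLexMinimal M ↔
      ∀ (i : ℕ), 1 ≤ i → ∀ (h : i ≤ m),
        IsRowLexMinimal (Matrix.of fun (r : Fin i) (c : Fin n) => M (Fin.castLE h r) c) := by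
  constructor
  · intro hmin i _ h N hN
    obtain ⟨N', hN', rfl⟩ := HadamardEquiv.exists_submatrix_castLE_eq h hN
    exact (hmin N' hN').submatrix_castLE h
  · intro hinitial
    rcases Nat.eq_zero_or_pos m with rfl | hm
    · exact fun N _ => (Subsingleton.elim _ _).le
    · exact hinitial m hm le_rfl
end

section
/- For every m×n integer matrix M, the minimal element Min(M) of the Hadamard equivalence class of M with respect to the row-lex ordering equals the minimum, over all m×m signed permutation matrices P, of Ord(Neg(P·M)). -/
/-!
Column operations (permuting columns and flipping their signs) are exactly the right
multiplications by signed permutation matrices. Call a matrix column-normalized if no column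
begins with a positive entry and its columns increase lexicographically. Two column-normalized
matrices related by column operations are equal: flipping the sign of a nonzero column makes it
begin positively on one side, and a tuple has only one monotone rearrangement.

Write the minimum as `M₀ = P * M * Q`. It is column-normalized, since negating a column that
begins positively, or swapping two columns out of order, would produce a row-lex smaller matrix
in the class. `Ord(Neg(P * M))` is column-normalized and related to `P * M`, hence to `M₀`, by
column operations, so the two agree. Every `Ord(Neg(P' * M))` lies in the class, which gives the
lower bound.
-/

open Matrix

/-- A vector begins with a positive entry: its first nonzero coordinate is positive. -/
def BeginsPos {k : ℕ} (v : Fin k → ℤ) : Prop :=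
  ∃ j : Fin k, 0 < v j ∧ ∀ i : Fin k, i < j → v i = 0

/-- `NegCols M` is obtained from `M` by negating every column whose first nonzero
entry is positive. -/
noncomputable def NegCols {m n : ℕ} (M : Matrix (Fin m) (Fin n) ℤ) :
    Matrix (Fin m) (Fin n) ℤ :=
  haveI := Classical.propDecidable
  Matrix.of fun i j => if BeginsPos (fun r => M r j) then -M i j else M i j

/-- `OrdCols M` is obtained from `M` by permuting its columns so that they appear from
left to right in weakly increasing lexicographic order. -/
noncomputable def OrdCols {m n : ℕ} (M : Matrix (Fin m) (Fin n) ℤ) :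
    Matrix (Fin m) (Fin n) ℤ :=
  letI : LinearOrder (Lex (Fin m → ℤ)) :=
    @Pi.Lex.linearOrder (Fin m) (fun _ => ℤ)
      inferInstance (inferInstance : WellFoundedLT (Fin m)) (fun _ => inferInstance)
  Matrix.of fun i j => M i (Tuple.sort (fun c => toLex (fun r => M r c)) j)

section

variable {m n : ℕ}

def ColEquiv (A B : Matrix (Fin m) (Fin n) ℤ) : Prop :=
  ∃ (σ : Equiv.Perm (Fin n)) (ε : Fin n → ℤˣ), ∀ i j, B i j = ε j * A i (σ j)

namespace ColEquiv

theorem symm {A B : Matrix (Fin m) (Fin n) ℤ} (h : ColEquiv A B) : ColEquiv B A := by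
  obtain ⟨σ, ε, hB⟩ := h
  refine ⟨σ⁻¹, fun j => (ε (σ⁻¹ j))⁻¹, fun i j => ?_⟩
  rw [hB, ← Equiv.Perm.mul_apply, mul_inv_cancel, Equiv.Perm.one_apply, ← mul_assoc,
    ← Units.val_mul, inv_mul_cancel, Units.val_one, one_mul]

theorem trans {A B C : Matrix (Fin m) (Fin n) ℤ} (hAB : ColEquiv A B) (hBC : ColEquiv B C) :
    ColEquiv A C := by
  obtain ⟨σ, ε, hB⟩ := hAB
  obtain ⟨τ, δ, hC⟩ := hBC
  refine ⟨σ * τ, fun j => δ j * ε (τ j), fun i j => ?_⟩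
  rw [hC, hB, Units.val_mul, mul_assoc, Equiv.Perm.mul_apply]

end ColEquiv

theorem IsSignedPerm.exists_perm {Q : Matrix (Fin n) (Fin n) ℤ} (hQ : IsSignedPerm Q) :
    ∃ σ : Equiv.Perm (Fin n), ∀ k j, Q k j ≠ 0 ↔ k = σ j := by
  choose s hs hs_unique using hQ.2.2
  have hinj : Function.Injective s := fun j j' hjj' =>
    (hQ.2.1 (s j)).unique (hs j) (hjj' ▸ hs j')
  exact ⟨Equiv.ofBijective s hinj.bijective_of_finite,
    fun k j => ⟨hs_unique j k, fun hk => hk ▸ hs j⟩⟩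

theorem colEquiv_mul_of_isSignedPerm (A : Matrix (Fin m) (Fin n) ℤ)
    {Q : Matrix (Fin n) (Fin n) ℤ} (hQ : IsSignedPerm Q) : ColEquiv A (A * Q) := by
  obtain ⟨σ, hσ⟩ := hQ.exists_perm
  have hunit : ∀ j, IsUnit (Q (σ j) j) := fun j => by
    have hne := (hσ (σ j) j).2 rfl
    rcases hQ.1 (σ j) j with h | h | h <;> simp [h] at hne ⊢
  refine ⟨σ, fun j => (hunit j).unit, fun i j => ?_⟩
  rw [Matrix.mul_apply, Finset.sum_eq_single_of_mem (σ j) (Finset.mem_univ _),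
    IsUnit.unit_spec, mul_comm]
  intro k _ hk
  rw [not_ne_iff.1 (mt (hσ k j).1 hk), mul_zero]

theorem ColEquiv.exists_isSignedPerm {A B : Matrix (Fin m) (Fin n) ℤ} (h : ColEquiv A B) :
    ∃ Q : Matrix (Fin n) (Fin n) ℤ, IsSignedPerm Q ∧ B = A * Q := by
  classical
  obtain ⟨σ, ε, hB⟩ := h
  let Q : Matrix (Fin n) (Fin n) ℤ := of fun k j => if k = σ j then (ε j : ℤ) else 0
  have hQ : ∀ k j, Q k j ≠ 0 ↔ k = σ j := fun k j => by
    by_cases hk : k = σ j <;> simp [Q, hk]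
  refine ⟨Q, ⟨fun k j => ?_, fun k => ⟨σ.symm k, ?_, ?_⟩, fun j => ⟨σ j, ?_, ?_⟩⟩, ?_⟩
  · by_cases hk : k = σ j
    · rcases Int.units_eq_one_or (ε j) with h | h <;> simp [Q, hk, h]
    · simp [Q, hk]
  · simp [hQ]
  · intro j hj
    simp [(hQ k j).1 hj]
  · simp [hQ]
  · exact fun k hk => (hQ k j).1 hk
  · ext i j
    rw [Matrix.mul_apply, hB, Finset.sum_eq_single_of_mem (σ j) (Finset.mem_univ _)]
    · simp [Q, mul_comm]
    · intro k _ hk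
      simp [Q, hk]

theorem BeginsPos.not_neg {k : ℕ} {v : Fin k → ℤ} (h : BeginsPos v) : ¬BeginsPos (-v) := by
  rintro ⟨j', hj', hz'⟩
  obtain ⟨j, hj, hz⟩ := h
  have hj'_neg : v j' < 0 := neg_pos.1 hj'
  rcases lt_trichotomy j j' with hlt | rfl | hlt
  · exact hj.ne' (neg_eq_zero.1 (hz' j hlt))
  · exact hj.not_gt hj'_neg
  · exact hj'_neg.ne (hz j' hlt)

theorem beginsPos_or_beginsPos_neg {k : ℕ} {v : Fin k → ℤ} (hv : v ≠ 0) :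
    BeginsPos v ∨ BeginsPos (-v) := by
  obtain ⟨j, hj, hmin⟩ := WellFounded.has_min wellFounded_lt {j | v j ≠ 0}
    (Function.ne_iff.1 hv)
  have hzero : ∀ i < j, v i = 0 := fun i hi => not_not.1 fun hi' => hmin i hi' hi
  rcases (Ne.lt_or_gt hj : v j < 0 ∨ 0 < v j) with hneg | hpos
  · exact Or.inr ⟨j, neg_pos.2 hneg, fun i hi => by simp [hzero i hi]⟩
  · exact Or.inl ⟨j, hpos, hzero⟩

theorem negCols_transpose_of_beginsPos {A : Matrix (Fin m) (Fin n) ℤ} {j : Fin n}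
    (h : BeginsPos (Aᵀ j)) : (NegCols A)ᵀ j = -Aᵀ j :=
  funext fun _ => if_pos h

theorem negCols_transpose_of_not_beginsPos {A : Matrix (Fin m) (Fin n) ℤ} {j : Fin n}
    (h : ¬BeginsPos (Aᵀ j)) : (NegCols A)ᵀ j = Aᵀ j :=
  funext fun _ => if_neg h

theorem not_beginsPos_negCols (A : Matrix (Fin m) (Fin n) ℤ) (j : Fin n) :
    ¬BeginsPos ((NegCols A)ᵀ j) := by
  by_cases h : BeginsPos (Aᵀ j)
  · rw [negCols_transpose_of_beginsPos h]
    exact h.not_neg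
  · rwa [negCols_transpose_of_not_beginsPos h]

theorem colEquiv_negCols (A : Matrix (Fin m) (Fin n) ℤ) : ColEquiv A (NegCols A) := by
  classical
  refine ⟨1, fun j => if BeginsPos (Aᵀ j) then -1 else 1, fun i j => ?_⟩
  by_cases h : BeginsPos (Aᵀ j)
  · rw [← transpose_apply (NegCols A), negCols_transpose_of_beginsPos h]
    simp [h]
  · rw [← transpose_apply (NegCols A), negCols_transpose_of_not_beginsPos h]
    simp [h]

def colLex (A : Matrix (Fin m) (Fin n) ℤ) : Fin n → Lex (Fin m → ℤ) :=
  fun j => toLex (Aᵀ j)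

theorem colEquiv_ordCols (A : Matrix (Fin m) (Fin n) ℤ) : ColEquiv A (OrdCols A) :=
  ⟨Tuple.sort (colLex A), 1, fun _ _ => (one_mul _).symm⟩

structure ColNormalized (A : Matrix (Fin m) (Fin n) ℤ) : Prop where
  not_beginsPos : ∀ j, ¬BeginsPos (Aᵀ j)
  monotone : Monotone (colLex A)

theorem colNormalized_ordCols_negCols (A : Matrix (Fin m) (Fin n) ℤ) :
    ColNormalized (OrdCols (NegCols A)) where
  not_beginsPos j := not_beginsPos_negCols A (Tuple.sort _ j)
  monotone := Tuple.monotone_sort (colLex (NegCols A))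

theorem ColNormalized.eq_of_colEquiv {A B : Matrix (Fin m) (Fin n) ℤ} (hA : ColNormalized A)
    (hB : ColNormalized B) (h : ColEquiv A B) : A = B := by
  obtain ⟨σ, ε, hBA⟩ := h
  have hcol : ∀ j, Bᵀ j = Aᵀ (σ j) := by
    intro j
    have hBcol : Bᵀ j = (ε j : ℤ) • Aᵀ (σ j) := funext fun i => hBA i j
    rcases Int.units_eq_one_or (ε j) with hε | hε
    · rw [hBcol, hε, Units.val_one, one_smul]
    · by_cases hzero : Aᵀ (σ j) = 0
      · rw [hBcol, hzero, smul_zero]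
      · rw [hε, Units.val_neg, Units.val_one, neg_one_smul] at hBcol
        exact ((beginsPos_or_beginsPos_neg hzero).elim (hA.not_beginsPos _)
          (hBcol ▸ hB.not_beginsPos j)).elim
  have hcolLex : colLex B = colLex A ∘ σ := funext fun j => congrArg toLex (hcol j)
  have hsorted : colLex A ∘ σ = colLex A ∘ (1 : Equiv.Perm (Fin n)) :=
    Tuple.unique_monotone (hcolLex ▸ hB.monotone) hA.monotone
  exact transpose_injective <| funext fun j =>
    toLex.injective (congrFun (hcolLex.trans hsorted) j).symm

theorem not_rowLexLe_of_lt_row {M N : Matrix (Fin m) (Fin n) ℤ} (i₀ : Fin m)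
    (hrows : ∀ r < i₀, N r = M r) (hlt : toLex (N i₀) < toLex (M i₀)) : ¬rowLexLe M N :=
  fun hle => (hle.trans_lt ⟨i₀, fun r hr => congrArg toLex (hrows r hr), hlt⟩).false

theorem not_beginsPos_of_forall_colEquiv_rowLexLe {M : Matrix (Fin m) (Fin n) ℤ}
    (hmin : ∀ N, ColEquiv M N → rowLexLe M N) (j₀ : Fin n) : ¬BeginsPos (Mᵀ j₀) := by
  classical
  rintro ⟨i₀, hpos, hzero⟩
  let ε : Fin n → ℤˣ := Function.update 1 j₀ (-1)
  let N : Matrix (Fin m) (Fin n) ℤ := of fun i j => ε j * M i j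
  refine not_rowLexLe_of_lt_row i₀ (fun r hr => funext fun j => ?_) ⟨j₀, fun j hj => ?_, ?_⟩
    (hmin N ⟨1, ε, fun _ _ => rfl⟩)
  · by_cases hj : j = j₀
    · simp [N, ε, hj, show M r j₀ = 0 from hzero r hr]
    · simp [N, ε, hj]
  · simp [N, ε, hj.ne]
  · have : 0 < M i₀ j₀ := hpos
    simpa [N, ε] using neg_lt_self this

theorem monotone_colLex_of_forall_colEquiv_rowLexLe {M : Matrix (Fin m) (Fin n) ℤ}
    (hmin : ∀ N, ColEquiv M N → rowLexLe M N) : Monotone (colLex M) := by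
  intro j j' hjj'
  by_contra hle
  obtain ⟨i₀, hzero, hlt⟩ := not_le.1 hle
  have hzero' : ∀ r < i₀, M r j' = M r j := hzero
  have hlt' : M i₀ j' < M i₀ j := hlt
  have hjj'_lt : j < j' := hjj'.lt_of_ne (by rintro rfl; exact (not_le.1 hle).false)
  let N : Matrix (Fin m) (Fin n) ℤ := M.submatrix id (Equiv.swap j j')
  refine not_rowLexLe_of_lt_row i₀ (fun r hr => funext fun c => ?_) ⟨j, fun c hc => ?_, ?_⟩
    (hmin N ⟨Equiv.swap j j', 1, fun _ _ => by simp [N]⟩)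
  · simp only [N, submatrix_apply, id, Equiv.swap_apply_def]
    split_ifs with h₁ h₂
    · rw [h₁, hzero' r hr]
    · rw [h₂, hzero' r hr]
    · rfl
  · simp [N, Equiv.swap_apply_of_ne_of_ne hc.ne (hc.trans hjj'_lt).ne]
  · simpa [N] using hlt'

theorem ColNormalized.of_forall_colEquiv_rowLexLe {M : Matrix (Fin m) (Fin n) ℤ}
    (hmin : ∀ N, ColEquiv M N → rowLexLe M N) : ColNormalized M :=
  ⟨not_beginsPos_of_forall_colEquiv_rowLexLe hmin,
    monotone_colLex_of_forall_colEquiv_rowLexLe hmin⟩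

theorem hadamardEquiv_of_colEquiv_mul {M N : Matrix (Fin m) (Fin n) ℤ}
    {P : Matrix (Fin m) (Fin m) ℤ} (hP : IsSignedPerm P) (h : ColEquiv (P * M) N) :
    HadamardEquiv M N :=
  let ⟨Q, hQ, hN⟩ := h.exists_isSignedPerm
  ⟨P, Q, hP, hQ, hN⟩

theorem colEquiv_ordCols_negCols (A : Matrix (Fin m) (Fin n) ℤ) :
    ColEquiv A (OrdCols (NegCols A)) :=
  (colEquiv_negCols A).trans (colEquiv_ordCols _)

end

/-- For every integer matrix `M`, the minimal element `M₀` of the Hadamard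
equivalence class of `M` with respect to the row-lex ordering equals the minimum, over
all signed permutation matrices `P`, of `Ord(Neg(P * M))`: it is attained by some `P`
and is a row-lex lower bound of `Ord(Neg(P * M))` over all `P`. -/
theorem min_of_class_eq_min_ord_neg {m n : ℕ} (M M₀ : Matrix (Fin m) (Fin n) ℤ)
    (hmem : HadamardEquiv M M₀)
    (hmin : ∀ A, HadamardEquiv M A → rowLexLe M₀ A) :
    (∃ P : Matrix (Fin m) (Fin m) ℤ, IsSignedPerm P ∧ M₀ = OrdCols (NegCols (P * M))) ∧
    (∀ P : Matrix (Fin m) (Fin m) ℤ, IsSignedPerm P →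
      rowLexLe M₀ (OrdCols (NegCols (P * M)))) := by
  obtain ⟨P, Q, hP, hQ, rfl⟩ := hmem
  have hPMQ : ColEquiv (P * M) (P * M * Q) := colEquiv_mul_of_isSignedPerm _ hQ
  have hnormalized : ColNormalized (P * M * Q) :=
    .of_forall_colEquiv_rowLexLe fun N hN =>
      hmin N (hadamardEquiv_of_colEquiv_mul hP (hPMQ.trans hN))
  refine ⟨⟨P, hP, ?_⟩, fun P' hP' => hmin _ ?_⟩
  · exact hnormalized.eq_of_colEquiv (colNormalized_ordCols_negCols _)
      (hPMQ.symm.trans (colEquiv_ordCols_negCols _))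
  · exact hadamardEquiv_of_colEquiv_mul hP' (colEquiv_ordCols_negCols _)
end

section
/- Let M be an (n₁n₂)×(n₁n₂) integer matrix partitioned into n₁×n₁ blocks C_{ij}, each of which is a circulant n₂×n₂ integer matrix, and suppose M·Mᵀ = k·I. Let S be the n₁×n₁ integer matrix whose (i,j) entry is the common row sum of the block C_{ij}. Then S·Sᵀ = k·I_{n₁}, i.e., S ∈ IW(n₁,k). -/
/-!
Let `E` be the `(n₁ n₂) × n₁` matrix whose `j`-th column is the indicator of the `j`-th block
of indices. A circulant block has column sums equal to its row sum, so `Eᵀ M = S Eᵀ`.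
Multiplying `M Mᵀ = k I` by `Eᵀ` on the left and `E` on the right, and using `Eᵀ E = n₂ I`,
gives `n₂ S Sᵀ = n₂ k I`, and `n₂` cancels in `ℤ`.
-/

open Matrix

section BlockOnes

variable {ι κ R : Type*} [Fintype ι] [Fintype κ] [DecidableEq ι] [CommSemiring R]

def blockOnes (ι κ R : Type*) [DecidableEq ι] [Zero R] [One R] : Matrix (ι × κ) ι R :=
  of fun p i => if p.1 = i then 1 else 0

omit [Fintype ι] [Fintype κ] in
@[simp]
theorem blockOnes_apply (p : ι × κ) (i : ι) :
    blockOnes ι κ R p i = if p.1 = i then 1 else 0 :=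
  rfl

theorem transpose_blockOnes_mul_blockOnes :
    (blockOnes ι κ R)ᵀ * blockOnes ι κ R = (Fintype.card κ : R) • 1 := by
  ext i j
  rcases eq_or_ne i j with rfl | h
  · simp [mul_apply, Fintype.sum_prod_type]
  · simp [mul_apply, Fintype.sum_prod_type, h, h.symm]

theorem transpose_blockOnes_mul_eq_of_colSums {M : Matrix (ι × κ) (ι × κ) R} {S : Matrix ι ι R}
    (hS : ∀ j l c, ∑ b, M (j, b) (l, c) = S j l) :
    (blockOnes ι κ R)ᵀ * M = S * (blockOnes ι κ R)ᵀ := by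
  ext j ⟨l, c⟩
  simp only [mul_apply, transpose_apply, blockOnes_apply, ite_mul, one_mul, zero_mul,
    Fintype.sum_prod_type, mul_ite, mul_one, mul_zero]
  rw [Fintype.sum_eq_single j fun x hx => by simp [hx]]
  simp [hS]

theorem card_smul_mul_transpose_eq_of_colSums [DecidableEq κ] {M : Matrix (ι × κ) (ι × κ) R}
    {S : Matrix ι ι R} {k : R} (hS : ∀ j l c, ∑ b, M (j, b) (l, c) = S j l)
    (hM : M * Mᵀ = k • 1) :
    (Fintype.card κ : R) • (S * Sᵀ) = (Fintype.card κ : R) • k • 1 := by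
  have hE := transpose_blockOnes_mul_eq_of_colSums hS
  calc (Fintype.card κ : R) • (S * Sᵀ)
      = S * ((blockOnes ι κ R)ᵀ * blockOnes ι κ R) * Sᵀ := by
        rw [transpose_blockOnes_mul_blockOnes, Matrix.mul_smul, Matrix.mul_one, Matrix.smul_mul]
    _ = ((blockOnes ι κ R)ᵀ * M) * ((blockOnes ι κ R)ᵀ * M)ᵀ := by
        rw [hE, transpose_mul, transpose_transpose]; simp only [Matrix.mul_assoc]
    _ = (blockOnes ι κ R)ᵀ * (M * Mᵀ) * blockOnes ι κ R := by
        rw [transpose_mul, transpose_transpose]; simp only [Matrix.mul_assoc]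
    _ = (Fintype.card κ : R) • k • 1 := by
        rw [hM, Matrix.mul_smul, Matrix.mul_one, Matrix.smul_mul,
          transpose_blockOnes_mul_blockOnes, smul_comm]

end BlockOnes

theorem Fintype.sum_comp_sub_right_eq_sum_comp_sub_left {G M : Type*} [AddCommGroup G] [Fintype G]
    [AddCommMonoid M] (f : G → M) (a c : G) : ∑ b, f (b - c) = ∑ b, f (a - b) :=
  ((Equiv.subRight c).sum_comp f).trans ((Equiv.subLeft a).sum_comp f).symm

/-- If an `(n₁n₂)×(n₁n₂)` integer matrix `M`, partitioned into `n₁×n₁`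
blocks each of which is a circulant `n₂×n₂` matrix, satisfies `M * Mᵀ = k • I`, then
the `n₁×n₁` matrix `S` of common row sums of the blocks satisfies `S * Sᵀ = k • I`,
i.e. `S ∈ IW(n₁, k)`. -/
theorem blockCirculant_rowSums_mem_IW (n₁ n₂ : ℕ) [NeZero n₂] (k : ℤ)
    (M : Matrix (Fin n₁ × ZMod n₂) (Fin n₁ × ZMod n₂) ℤ)
    (hcirc : ∀ i j : Fin n₁, ∃ f : ZMod n₂ → ℤ,
      ∀ a b : ZMod n₂, M (i, a) (j, b) = f (a - b))
    (hM : M * Mᵀ = k • (1 : Matrix (Fin n₁ × ZMod n₂) (Fin n₁ × ZMod n₂) ℤ))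
    (S : Matrix (Fin n₁) (Fin n₁) ℤ)
    (hS : ∀ (i j : Fin n₁) (a : ZMod n₂), S i j = ∑ b : ZMod n₂, M (i, a) (j, b)) :
    S * Sᵀ = k • (1 : Matrix (Fin n₁) (Fin n₁) ℤ) := by
  have hcolSum : ∀ j l c, ∑ b, M (j, b) (l, c) = S j l := by
    intro j l c
    obtain ⟨f, hf⟩ := hcirc j l
    simp only [hS j l 0, hf, Fintype.sum_comp_sub_right_eq_sum_comp_sub_left f 0 c]
  have hcard : (Fintype.card (ZMod n₂) : ℤ) ≠ 0 := by simp [NeZero.ne n₂]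
  exact smul_right_injective _ hcard (card_smul_mul_transpose_eq_of_colSums hcolSum hM)
end
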